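/- Let Γ be a non-amenable finitely generated group with word metric d, μ a probability measure whose support generates Γ as a semigroup, (Zₙ) the corresponding random walk, A ⊆ Γ, and D_A = inf{n ≥ 0 : Zₙ ∉ A}. If P_x[D_A = ∞] > 0 and the random walk conditioned on {D_A = ∞} is transient in the sense that it visits each element of Γ only finitely often almost surely, then P_x[lim_{n→∞} d(Zₙ, A^c) = ∞ | D_A = ∞] = 1. -/

import Mathlib

/-!
Fix `m`. By left invariance and finiteness of balls there is a finite set of words in the support
of `μ`, of length at most `K`, such that from every point within distance `m` of `Aᶜ` one of them
leads into `Aᶜ`; let `p > 0` be the least probability of spelling one of them. Follow the visits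
of the walk to this neighbourhood of `Aᶜ`, each taken at least `K` steps after the previous one,
so that the escape attempt started at a visit is decided before the next visit. Conditionally on
the past, each attempt succeeds with probability at least `p`, so the walk stays in `A` through
`j` visits with probability at most `(1 - p) ^ j`. Hence a walk that stays in `A` forever visits
the neighbourhood only finitely often, almost surely, for every `m`.
-/

open MeasureTheory ProbabilityTheory Filter Function
open scoped ENNReal

def IsSeparatedVisit {α : Type*} (N : Set α) (K : ℕ) (z : ℕ → α) : ℕ → ℕ → Prop
  | 0, n => z n ∈ N ∧ ∀ k < n, z k ∉ N
  | j + 1, n => ∃ m, IsSeparatedVisit N K z j m ∧ m + K ≤ n ∧ z n ∈ N ∧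
      ∀ k, m + K ≤ k → k < n → z k ∉ N

namespace IsSeparatedVisit

variable {α : Type*} {N : Set α} {K : ℕ} {z z' : ℕ → α}

lemma mem : ∀ {j n : ℕ}, IsSeparatedVisit N K z j n → z n ∈ N
  | 0, _, h => h.1
  | _ + 1, _, ⟨_, _, _, h, _⟩ => h

lemma unique : ∀ {j n n' : ℕ}, IsSeparatedVisit N K z j n → IsSeparatedVisit N K z j n' → n = n'
  | 0, n, n', ⟨hn, hmin⟩, ⟨hn', hmin'⟩ => by
    by_contra hne
    rcases Nat.lt_or_gt_of_ne hne with h | h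
    exacts [hmin' n h hn, hmin n' h hn']
  | _ + 1, n, n', ⟨m, hm, hmn, hn, hmin⟩, ⟨m', hm', hmn', hn', hmin'⟩ => by
    obtain rfl : m = m' := unique hm hm'
    by_contra hne
    rcases Nat.lt_or_gt_of_ne hne with h | h
    exacts [hmin' n hmn h hn, hmin n' hmn' h hn']

lemma exists_of_frequently (hfreq : ∃ᶠ n in atTop, z n ∈ N) : ∀ j, ∃ n, IsSeparatedVisit N K z j n
  | 0 => by
    have hne : {n | z n ∈ N}.Nonempty := hfreq.exists
    exact ⟨sInf {n | z n ∈ N}, Nat.sInf_mem hne, fun k hk => Nat.notMem_of_lt_sInf hk⟩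
  | j + 1 => by
    obtain ⟨m, hm⟩ := exists_of_frequently hfreq j
    have hne : {n | m + K ≤ n ∧ z n ∈ N}.Nonempty := (frequently_atTop.1 hfreq (m + K))
    exact ⟨sInf _, m, hm, (Nat.sInf_mem hne).1, (Nat.sInf_mem hne).2,
      fun k hmk hk hkN => Nat.notMem_of_lt_sInf hk ⟨hmk, hkN⟩⟩

lemma exists_add_le : ∀ {j i n : ℕ}, IsSeparatedVisit N K z (j + 1) n → i ≤ j →
    ∃ k, IsSeparatedVisit N K z i k ∧ k + K ≤ n
  | 0, _, _, ⟨m, hm, hmn, _⟩, hi => by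
    obtain rfl := Nat.le_zero.mp hi
    exact ⟨m, hm, hmn⟩
  | j + 1, i, _, ⟨m, hm, hmn, _⟩, hi => by
    rcases Nat.lt_or_ge i (j + 1) with h | h
    · obtain ⟨k, hk, hkm⟩ := exists_add_le hm (Nat.lt_succ_iff.mp h)
      exact ⟨k, hk, by omega⟩
    · obtain rfl := le_antisymm hi h
      exact ⟨m, hm, hmn⟩

lemma congr : ∀ {j n : ℕ}, (∀ l ≤ n, z l = z' l) →
    IsSeparatedVisit N K z j n → IsSeparatedVisit N K z' j n
  | 0, n, hzz', ⟨hn, hmin⟩ => ⟨hzz' n le_rfl ▸ hn, fun k hk => hzz' k hk.le ▸ hmin k hk⟩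
  | _ + 1, n, hzz', ⟨m, hm, hmn, hn, hmin⟩ =>
    ⟨m, congr (fun l hl => hzz' l (by omega)) hm, hmn, hzz' n le_rfl ▸ hn,
      fun k hmk hk => hzz' k hk.le ▸ hmin k hmk hk⟩

end IsSeparatedVisit

section

variable {Ω : Type*} [MeasurableSpace Ω] {μ : Measure Ω}

lemma measure_le_mul_of_subset_iUnion {ι : Type*} [Countable ι] {C C' : Set Ω}
    {D E : ι → Set Ω} {q : ℝ≥0∞} (hC' : C' ⊆ ⋃ i, E i) (hE : ∀ i, μ (E i) ≤ q * μ (D i))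
    (hD : Pairwise (Disjoint on D)) (hDm : ∀ i, MeasurableSet (D i)) (hC : ⋃ i, D i ⊆ C) :
    μ C' ≤ q * μ C :=
  calc μ C' ≤ ∑' i, μ (E i) := (measure_mono hC').trans (measure_iUnion_le _)
    _ ≤ ∑' i, q * μ (D i) := ENNReal.tsum_le_tsum hE
    _ = q * μ (⋃ i, D i) := by rw [ENNReal.tsum_mul_left, measure_iUnion hD hDm]
    _ ≤ q * μ C := by gcongr

lemma measure_eq_zero_of_subset_of_le_mul [IsFiniteMeasure μ] {B : Set Ω} {C : ℕ → Set Ω}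
    {q : ℝ≥0∞} (hq : q < 1) (hB : ∀ j, B ⊆ C j) (hC : ∀ j, μ (C (j + 1)) ≤ q * μ (C j)) :
    μ B = 0 := by
  have hgeom : ∀ j, μ B ≤ q ^ j * μ (C 0) := fun j => by
    refine (measure_mono (hB j)).trans ?_
    induction j with
    | zero => simp
    | succ j ih => exact (hC j).trans (by rw [pow_succ', mul_assoc]; gcongr)
  have hlim : Tendsto (fun j => q ^ j * μ (C 0)) atTop (nhds 0) := by
    simpa using ENNReal.Tendsto.mul_const (ENNReal.tendsto_pow_atTop_nhds_zero_of_lt_one hq)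
      (Or.inr (measure_ne_top μ (C 0)))
  exact le_zero_iff.mp (ge_of_tendsto' hlim hgeom)

end

section

variable {Ω β : Type*} {X : ℕ → Ω → β}

def block (X : ℕ → Ω → β) (n len : ℕ) (ω : Ω) : Fin len → β := fun i => X (n + i) ω

def spells (X : ℕ → Ω → β) (n : ℕ) (w : List β) : Set Ω :=
  block X n w.length ⁻¹' {w.get}

def DeterminedBefore (X : ℕ → Ω → β) (n : ℕ) (D : Set Ω) : Prop :=
  ∀ ω ω', (∀ i < n, X i ω = X i ω') → ω ∈ D → ω' ∈ D

lemma DeterminedBefore.eq_preimage_image {n : ℕ} {D : Set Ω} (hD : DeterminedBefore X n D) :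
    D = block X 0 n ⁻¹' (block X 0 n '' D) := by
  refine (Set.subset_preimage_image _ _).antisymm ?_
  rintro ω ⟨ω', hω', hblock⟩
  exact hD ω' ω (fun i hi => by simpa [block] using congrFun hblock ⟨i, hi⟩) hω'

variable [MeasurableSpace Ω] [MeasurableSpace β]

lemma measurable_block (hX : ∀ i, Measurable (X i)) (n len : ℕ) : Measurable (block X n len) :=
  measurable_pi_lambda _ fun _ => hX _

namespace DeterminedBefore

variable {n : ℕ} {D : Set Ω} [Countable β] [MeasurableSingletonClass β]

lemma measurableSet (hX : ∀ i, Measurable (X i)) (hD : DeterminedBefore X n D) :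
    MeasurableSet D := by
  rw [hD.eq_preimage_image]
  exact measurable_block hX 0 n MeasurableSet.of_discrete

lemma measure_inter_block_preimage {P : Measure Ω} [IsProbabilityMeasure P]
    (hX : ∀ i, Measurable (X i)) (hindep : iIndepFun X P) (hD : DeterminedBefore X n D)
    {len : ℕ} (S : Set (Fin len → β)) :
    P (D ∩ block X n len ⁻¹' S) = P D * P (block X n len ⁻¹' S) := by
  have hdisj : Disjoint (Finset.range n) (Finset.Ico n (n + len)) := by
    simp only [Finset.disjoint_left, Finset.mem_range, Finset.mem_Ico]
    omega
  have hpast : Measurable fun (v : Finset.range n → β) (i : Fin n) =>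
      v ⟨0 + i, by simp⟩ := measurable_pi_lambda _ fun _ => measurable_pi_apply _
  have hfuture : Measurable fun (v : Finset.Ico n (n + len) → β) (i : Fin len) =>
      v ⟨n + i, by simp⟩ := measurable_pi_lambda _ fun _ => measurable_pi_apply _
  have hindep' : IndepFun (block X 0 n) (block X n len) P :=
    (hindep.indepFun_finset _ _ hdisj hX).comp hpast hfuture
  rw [hD.eq_preimage_image]
  exact hindep'.measure_inter_preimage_eq_mul _ _ .of_discrete .of_discrete

end DeterminedBefore

lemma measure_block_preimage_singleton {P : Measure Ω} {μ : Measure β}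
    [MeasurableSingletonClass β] (hX : ∀ i, Measurable (X i)) (hindep : iIndepFun X P)
    (hlaw : ∀ i, P.map (X i) = μ) (n : ℕ) {len : ℕ} (v : Fin len → β) :
    P (block X n len ⁻¹' {v}) = ∏ i, μ {v i} := by
  have hblock : block X n len ⁻¹' {v} = ⋂ i ∈ (Finset.univ : Finset (Fin len)),
      (fun i : Fin len => X (n + i)) i ⁻¹' {v i} := by
    ext ω
    simp [block, funext_iff]
  have hindep' := hindep.precomp (g := fun i : Fin len => n + (i : ℕ))
    (fun i j h => Fin.ext (by simpa using h))
  rw [hblock, hindep'.measure_inter_preimage_eq_mul _ fun _ _ => measurableSet_singleton _]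
  refine Finset.prod_congr rfl fun i _ => ?_
  rw [← hlaw (n + i), Measure.map_apply (hX _) (measurableSet_singleton _)]

end

section RandomWalk

variable {Ω Γ : Type*} [Group Γ] {X Z : ℕ → Ω → Γ}

lemma walk_add_eq_mul_prod (hZs : ∀ n ω, Z (n + 1) ω = Z n ω * X n ω) (k t : ℕ) (ω : Ω) :
    Z (k + t) ω = Z k ω * (List.ofFn (block X k t ω)).prod := by
  induction t with
  | zero => simp
  | succ t ih =>
    rw [← add_assoc, hZs, ih, List.ofFn_succ_last, List.prod_append, List.prod_singleton,
      mul_assoc]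
    rfl

lemma walk_add_length_of_mem_spells (hZs : ∀ n ω, Z (n + 1) ω = Z n ω * X n ω) {k : ℕ}
    {w : List Γ} {ω : Ω} (h : ω ∈ spells X k w) : Z (k + w.length) ω = Z k ω * w.prod := by
  rw [walk_add_eq_mul_prod hZs, Set.mem_singleton_iff.mp h, List.ofFn_get]

lemma walk_eq_of_increments_eq (hZs : ∀ n ω, Z (n + 1) ω = Z n ω * X n ω) {ω ω' : Ω}
    (h0 : Z 0 ω = Z 0 ω') {n : ℕ} (h : ∀ i < n, X i ω = X i ω') : ∀ l ≤ n, Z l ω = Z l ω'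
  | 0, _ => h0
  | l + 1, hl => by
    rw [hZs, hZs, walk_eq_of_increments_eq hZs h0 h l (by omega), h l (by omega)]

lemma determinedBefore_walk_preimage {x : Γ} (hZ0 : ∀ ω, Z 0 ω = x)
    (hZs : ∀ n ω, Z (n + 1) ω = Z n ω * X n ω) (n : ℕ) (S : Set Γ) :
    DeterminedBefore X n (Z n ⁻¹' S) := fun ω ω' hX hω => by
  rwa [Set.mem_preimage,
    ← walk_eq_of_increments_eq hZs ((hZ0 ω).trans (hZ0 ω').symm) hX n le_rfl]

end RandomWalk

section Escape

variable {Ω Γ : Type*} (N : Set Γ) (K : ℕ) (X Z : ℕ → Ω → Γ) (word : Γ → List Γ)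

def failedEscapes (j : ℕ) : Set Ω :=
  {ω | ∀ i ≤ j, ∀ k, IsSeparatedVisit N K (Z · ω) i k → ω ∉ spells X k (word (Z k ω))}

def failedEscapesBefore (j n : ℕ) (z : Γ) : Set Ω :=
  {ω | IsSeparatedVisit N K (Z · ω) (j + 1) n ∧ Z n ω = z} ∩ failedEscapes N K X Z word j

variable {N K X Z word}

lemma failedEscapes_succ_subset_iUnion (j : ℕ) :
    {ω | ∃ n, IsSeparatedVisit N K (Z · ω) (j + 1) n} ∩ failedEscapes N K X Z word (j + 1) ⊆
      ⋃ q : ℕ × N, failedEscapesBefore N K X Z word j q.1 q.2 ∩ (spells X q.1 (word q.2))ᶜ := by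
  rintro ω ⟨⟨n, hn⟩, hfail⟩
  exact Set.mem_iUnion.mpr ⟨(n, ⟨Z n ω, hn.mem⟩),
    ⟨⟨hn, rfl⟩, fun i hi => hfail i (by omega)⟩, hfail (j + 1) le_rfl n hn⟩

lemma iUnion_failedEscapesBefore_subset (j : ℕ) :
    ⋃ q : ℕ × N, failedEscapesBefore N K X Z word j q.1 q.2 ⊆
      {ω | ∃ n, IsSeparatedVisit N K (Z · ω) j n} ∩ failedEscapes N K X Z word j := by
  rintro ω ⟨_, ⟨q, rfl⟩, ⟨⟨m, hm, -⟩, -⟩, hfail⟩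
  exact ⟨⟨m, hm⟩, hfail⟩

lemma pairwise_disjoint_failedEscapesBefore (j : ℕ) :
    Pairwise (Disjoint on fun q : ℕ × N => failedEscapesBefore N K X Z word j q.1 q.2) := by
  rintro ⟨n, z⟩ ⟨n', z'⟩ hne
  refine Set.disjoint_left.mpr fun ω ⟨⟨hn, hz⟩, _⟩ ⟨⟨hn', hz'⟩, _⟩ => hne ?_
  obtain rfl := hn.unique hn'
  exact Prod.ext rfl (Subtype.ext (hz.symm.trans hz'))

variable [Group Γ]

lemma stay_inter_frequently_subset_failedEscapes (hZs : ∀ n ω, Z (n + 1) ω = Z n ω * X n ω)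
    {A : Set Γ} (hexit : ∀ z ∈ N, z * (word z).prod ∉ A) (j : ℕ) :
    {ω | ∀ n, Z n ω ∈ A} ∩ {ω | ∃ᶠ n in atTop, Z n ω ∈ N} ⊆
      {ω | ∃ n, IsSeparatedVisit N K (Z · ω) j n} ∩ failedEscapes N K X Z word j := by
  rintro ω ⟨hstay, hfreq⟩
  refine ⟨IsSeparatedVisit.exists_of_frequently hfreq j, fun i _ k hk hspells => ?_⟩
  have hexit' := hexit _ hk.mem
  rw [← walk_add_length_of_mem_spells hZs hspells] at hexit'
  exact hexit' (hstay _)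

lemma determinedBefore_failedEscapesBefore {x : Γ} (hZ0 : ∀ ω, Z 0 ω = x)
    (hZs : ∀ n ω, Z (n + 1) ω = Z n ω * X n ω) (hlen : ∀ z ∈ N, (word z).length ≤ K)
    (j n : ℕ) (z : Γ) : DeterminedBefore X n (failedEscapesBefore N K X Z word j n z) := by
  rintro ω ω' hX ⟨⟨hn, hz⟩, hfail⟩
  have hZ := walk_eq_of_increments_eq hZs ((hZ0 ω).trans (hZ0 ω').symm) hX
  have hn' := hn.congr hZ
  refine ⟨⟨hn', hZ n le_rfl ▸ hz⟩, fun i hi k hk' hspells' => ?_⟩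
  -- the attempt at an earlier visit `k` only reads increments before `k + K ≤ n`
  obtain ⟨k₀, hk₀, hk₀n⟩ := hn'.exists_add_le hi
  obtain rfl := hk'.unique hk₀
  have hk := hk'.congr fun l hl => (hZ l (by omega)).symm
  have hlenk := hlen _ hk.mem
  refine hfail i hi k hk ?_
  rw [hZ k (by omega)] at hlenk ⊢
  simp only [spells, Set.mem_preimage] at hspells' ⊢
  rw [← hspells']
  exact funext fun l => hX _ (by omega)

end Escape

section Probability

variable {Ω Γ : Type*} [MeasurableSpace Ω] {P : Measure Ω} [IsProbabilityMeasure P]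
  [Group Γ] [MeasurableSpace Γ] [MeasurableSingletonClass Γ] [Countable Γ]
  {X Z : ℕ → Ω → Γ} {x : Γ} {A N : Set Γ}

theorem measure_stay_inter_frequently_eq_zero_of_escape_words (hX : ∀ i, Measurable (X i))
    (hindep : iIndepFun X P) (hZ0 : ∀ ω, Z 0 ω = x) (hZs : ∀ n ω, Z (n + 1) ω = Z n ω * X n ω)
    {K : ℕ} {word : Γ → List Γ} (hexit : ∀ z ∈ N, z * (word z).prod ∉ A)
    (hlen : ∀ z ∈ N, (word z).length ≤ K) {p : ℝ≥0∞} (hp : p ≠ 0)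
    (hp_le : ∀ z ∈ N, ∀ n, p ≤ P (spells X n (word z))) :
    P ({ω | ∀ n, Z n ω ∈ A} ∩ {ω | ∃ᶠ n in atTop, Z n ω ∈ N}) = 0 := by
  refine measure_eq_zero_of_subset_of_le_mul
    (ENNReal.sub_lt_self ENNReal.one_ne_top one_ne_zero hp)
    (stay_inter_frequently_subset_failedEscapes (K := K) hZs hexit) fun j => ?_
  have hdet := determinedBefore_failedEscapesBefore hZ0 hZs hlen j
  refine measure_le_mul_of_subset_iUnion (failedEscapes_succ_subset_iUnion j)
    (fun ⟨n, z, hz⟩ => ?_) (pairwise_disjoint_failedEscapesBefore j)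
    (fun q => (hdet q.1 q.2).measurableSet hX)
    (iUnion_failedEscapesBefore_subset j)
  have hspells : MeasurableSet (spells X n (word z)) :=
    measurable_block hX n _ (measurableSet_singleton _)
  calc P (failedEscapesBefore N K X Z word j n z ∩ (spells X n (word z))ᶜ)
      = P (spells X n (word z))ᶜ * P (failedEscapesBefore N K X Z word j n z) := by
        rw [spells, ← Set.preimage_compl, (hdet n z).measure_inter_block_preimage hX hindep,
          mul_comm]
    _ ≤ (1 - p) * P (failedEscapesBefore N K X Z word j n z) := by
        rw [prob_compl_eq_one_sub hspells]
        gcongr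
        exact hp_le z hz n

theorem measure_stay_inter_frequently_eq_zero {μ : Measure Γ} (hX : ∀ i, Measurable (X i))
    (hindep : iIndepFun X P) (hlaw : ∀ i, P.map (X i) = μ) (hZ0 : ∀ ω, Z 0 ω = x)
    (hZs : ∀ n ω, Z (n + 1) ω = Z n ω * X n ω) (W : Finset (List Γ))
    (hW : ∀ w ∈ W, ∀ g ∈ w, μ {g} ≠ 0) (hexit : ∀ z ∈ N, ∃ w ∈ W, z * w.prod ∉ A) :
    P ({ω | ∀ n, Z n ω ∈ A} ∩ {ω | ∃ᶠ n in atTop, Z n ω ∈ N}) = 0 := by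
  choose! word hword hexit using hexit
  set p := W.inf fun w => ∏ i : Fin w.length, μ {w[i]}
  have hp : p ≠ 0 := by
    rw [← pos_iff_ne_zero, Finset.lt_inf_iff ENNReal.zero_lt_top]
    intro w hw
    rw [pos_iff_ne_zero, Finset.prod_ne_zero_iff]
    exact fun i _ => hW w hw _ (List.getElem_mem _)
  refine measure_stay_inter_frequently_eq_zero_of_escape_words hX hindep hZ0 hZs hexit
    (fun z hz => W.le_sup (f := List.length) (hword z hz)) hp fun z hz n => ?_
  rw [spells, measure_block_preimage_singleton hX hindep hlaw]
  exact W.inf_le (hword z hz)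

end Probability

lemma countable_of_finite_sublevel {α : Type*} (f : α → ℝ) (hf : ∀ r : ℝ, {a | f a ≤ r}.Finite) :
    Countable α := by
  have huniv : (Set.univ : Set α) = ⋃ n : ℕ, {a | f a ≤ n} := by
    ext a
    simpa using exists_nat_ge (f a)
  exact Set.countable_univ_iff.mp (huniv ▸ Set.countable_iUnion fun n => (hf n).countable)

lemma Subsemigroup.exists_list_of_mem_closure {M : Type*} [Monoid M] {S : Set M} {g : M}
    (hg : g ∈ closure S) : ∃ l : List M, (∀ a ∈ l, a ∈ S) ∧ l.prod = g := by
  induction hg using closure_induction with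
  | mem a ha => exact ⟨[a], by simpa using ha, by simp⟩
  | mul a b _ _ iha ihb =>
    obtain ⟨l, hlS, rfl⟩ := iha
    obtain ⟨l', hl'S, rfl⟩ := ihb
    exact ⟨l ++ l', fun a ha => (List.mem_append.mp ha).elim (hlS a) (hl'S a), List.prod_append⟩

lemma exists_finset_list_prod_eq_of_dist_le {Γ : Type*} [Group Γ] {d : Γ → Γ → ℝ}
    (hleft : ∀ g a b : Γ, d (g * a) (g * b) = d a b) {r : ℝ} (hball : {g | d 1 g ≤ r}.Finite)
    {S : Set Γ} (hgen : Subsemigroup.closure S = ⊤) :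
    ∃ W : Finset (List Γ), (∀ l ∈ W, ∀ g ∈ l, g ∈ S) ∧
      ∀ z w, d z w ≤ r → ∃ l ∈ W, z * l.prod = w := by
  classical
  choose L hLS hLprod using fun g =>
    Subsemigroup.exists_list_of_mem_closure (hgen ▸ Subsemigroup.mem_top g)
  refine ⟨hball.toFinset.image L, by simpa using fun g _ => hLS g, fun z w hzw =>
    ⟨L (z⁻¹ * w), Finset.mem_image_of_mem _ (hball.mem_toFinset.mpr ?_), by
      rw [hLprod, mul_inv_cancel_left]⟩⟩
  simpa [← hleft z⁻¹ z w] using hzw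

lemma tendsto_iInf_dist_compl_atTop {Γ : Type*} {d : Γ → Γ → ℝ} {A : Set Γ} {z : ℕ → Γ}
    (h : ∀ m : ℕ, ∀ᶠ n in atTop, ∀ w ∉ A, (m : ℝ) < d (z n) w) :
    Tendsto (fun n => ⨅ w ∈ Aᶜ, ENNReal.ofReal (d (z n) w)) atTop (nhds ⊤) := by
  rw [ENNReal.tendsto_nhds_top_iff_nat]
  intro m
  filter_upwards [h (m + 1)] with n hn
  calc (m : ℝ≥0∞) < ENNReal.ofReal ((m + 1 : ℕ) : ℝ) := by
        rw [ENNReal.ofReal_natCast]; exact_mod_cast m.lt_succ_self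
    _ ≤ ⨅ w ∈ Aᶜ, ENNReal.ofReal (d (z n) w) :=
        le_iInf₂ fun w hw => ENNReal.ofReal_le_ofReal (hn w hw).le

theorem stmt19_general {Ω Γ : Type*} [MeasureSpace Ω] [IsProbabilityMeasure (ℙ : Measure Ω)]
    [Group Γ] [MeasurableSpace Γ] [MeasurableSingletonClass Γ]
    (d : Γ → Γ → ℝ)
    (hleft : ∀ g a b : Γ, d (g * a) (g * b) = d a b)
    (hballs : ∀ (z : Γ) (r : ℝ), {w | d z w ≤ r}.Finite)
    (μ : Measure Γ)
    (hgen : Subsemigroup.closure {g : Γ | μ {g} ≠ 0} = ⊤)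
    (X : ℕ → Ω → Γ) (hmeas : ∀ i, Measurable (X i))
    (hindep : iIndepFun X ℙ)
    (hlaw : ∀ i, Measure.map (X i) (ℙ : Measure Ω) = μ)
    (x : Γ) (Z : ℕ → Ω → Γ) (hZ0 : ∀ ω, Z 0 ω = x)
    (hZs : ∀ n ω, Z (n + 1) ω = Z n ω * X n ω)
    (A : Set Γ)
    (stay : Set Ω) (hstay : stay = {ω | ∀ n : ℕ, Z n ω ∈ A}) :
    ∀ᵐ ω ∂((ℙ : Measure Ω)[|stay]),
      Tendsto (fun n : ℕ => ⨅ w ∈ Aᶜ, ENNReal.ofReal (d (Z n ω) w)) atTop (nhds ⊤) := by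
  have : Countable Γ := countable_of_finite_sublevel (d 1) (hballs 1)
  have hstay_meas : MeasurableSet stay := by
    rw [hstay, Set.ofPred_forall]
    exact .iInter fun n => (determinedBefore_walk_preimage hZ0 hZs n A).measurableSet hmeas
  have hnear : ∀ m : ℕ, ∀ᵐ ω ∂((ℙ : Measure Ω)[|stay]),
      ω ∉ {ω | ∃ᶠ n in atTop, Z n ω ∈ {z | ∃ w ∉ A, d z w ≤ m}} := fun m => by
    obtain ⟨W, hWS, hW⟩ := exists_finset_list_prod_eq_of_dist_le hleft (hballs 1 m) hgen
    have hexit : ∀ z ∈ {z | ∃ w ∉ A, d z w ≤ m}, ∃ l ∈ W, z * l.prod ∉ A := by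
      rintro z ⟨w, hwA, hzw⟩
      obtain ⟨l, hl, rfl⟩ := hW z w hzw
      exact ⟨l, hl, hwA⟩
    have hzero := measure_stay_inter_frequently_eq_zero hmeas hindep hlaw hZ0 hZs W hWS hexit
    rw [← hstay] at hzero
    rw [← measure_eq_zero_iff_ae_notMem, cond_apply hstay_meas, hzero, mul_zero]
  filter_upwards [ae_all_iff.mpr hnear] with ω hω
  exact tendsto_iInf_dist_compl_atTop fun m => (not_frequently.mp (hω m)).mono
    fun n hn w hw => not_le.mp fun h => hn ⟨w, hw, h⟩

/-- If the walk has positive probability to stay in `A` forever, and conditioned on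
staying it visits each group element only finitely often (transience of the
conditioned walk), then conditioned on staying in `A` forever the distance from the
walk to `Aᶜ` tends to infinity almost surely. -/
theorem stmt19 {Ω Γ : Type*} [MeasureSpace Ω] [IsProbabilityMeasure (ℙ : Measure Ω)]
    [Group Γ] [MeasurableSpace Γ] [MeasurableSingletonClass Γ]
    (d : Γ → Γ → ℝ) (hd0 : ∀ a b, 0 ≤ d a b)
    (hleft : ∀ g a b : Γ, d (g * a) (g * b) = d a b)
    (hballs : ∀ (z : Γ) (r : ℝ), {w | d z w ≤ r}.Finite)
    (μ : Measure Γ) [IsProbabilityMeasure μ]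
    (hgen : Subsemigroup.closure {g : Γ | μ {g} ≠ 0} = ⊤)
    (X : ℕ → Ω → Γ) (hmeas : ∀ i, Measurable (X i))
    (hindep : iIndepFun X ℙ)
    (hlaw : ∀ i, Measure.map (X i) (ℙ : Measure Ω) = μ)
    (x : Γ) (Z : ℕ → Ω → Γ) (hZ0 : ∀ ω, Z 0 ω = x)
    (hZs : ∀ n ω, Z (n + 1) ω = Z n ω * X n ω)
    (A : Set Γ)
    (stay : Set Ω) (hstay : stay = {ω | ∀ n : ℕ, Z n ω ∈ A})
    (hpos : 0 < (ℙ : Measure Ω) stay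
)
    (htrans : ∀ᵐ ω ∂((ℙ : Measure Ω)[|stay]), ∀ g : Γ, {n : ℕ | Z n ω = g}.Finite) :
    ∀ᵐ ω ∂((ℙ : Measure Ω)[|stay]),
      Tendsto (fun n : ℕ => ⨅ w ∈ Aᶜ, ENNReal.ofReal (d (Z n ω) w)) atTop (nhds ⊤) :=
  stmt19_general d hleft hballs μ hgen X hmeas hindep hlaw x Z hZ0 hZs A stay hstay
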